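/- arXiv:2512.04151 — 2 statements merged into one kernel-verified Lean document; each statement's English description precedes it below -/
import Mathlib

section
/- For every positive integer k, the number of cyclic subgroups of (ℤ/kℤ)³ of order exactly k equals the generalized Dedekind psi function Ψ₃(k) = k² · ∏_{p prime, p ∣ k} (1 + 1/p + 1/p²). -/
/-! Every cyclic subgroup of order `k` has exactly `φ(k)` generators, so the number of such
subgroups is the number of elements of order `k` divided by `φ(k)`. In `(ℤ/kℤ)³` exactly `d³`
elements are killed by `d` for each `d ∣ k`, so by Möbius inversion the elements of order `k`
are counted by Jordan's totient `J₃(k) = ∑_{ab = k} μ(a) b³ = k³ ∏_{p ∣ k} (1 - p⁻³)`.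
Dividing by `φ(k) = k ∏_{p ∣ k} (1 - p⁻¹)` and using `1 - x³ = (1 - x)(1 + x + x²)` gives
the formula. -/

open Finset ArithmeticFunction ArithmeticFunction.Moebius UniqueFactorizationMonoid

theorem sum_divisors_moebius_mul_eq_prod_one_sub {R : Type*} [CommRing R]
    {f : ArithmeticFunction R} (hf : f.IsMultiplicative) {n : ℕ} (hn : n ≠ 0) :
    ∑ d ∈ n.divisors, μ d * f d = ∏ p ∈ n.primeFactors, (1 - f p) := by
  have hrad := IsMultiplicative.prodPrimeFactors_one_sub_of_squarefree f hf
    (squarefree_radical (a := n))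
  rw [Nat.primeFactors_radical] at hrad
  rw [hrad]
  refine (sum_subset (Nat.divisors_subset_of_dvd hn radical_dvd_self) fun d hd hd' => ?_).symm
  have hsq : ¬Squarefree d := fun hsq => hd' <| Nat.mem_divisors.mpr
    ⟨(dvd_radical_iff hsq.isRadical hn).mpr (Nat.dvd_of_mem_divisors hd), radical_ne_zero⟩
  simp [moebius_eq_zero_of_not_squarefree hsq]

theorem sum_divisorsAntidiagonal_moebius_mul_pow {K : Type*} [Field K] [CharZero K] {r : ℕ}
    (hr : r ≠ 0) {n : ℕ} (hn : n ≠ 0) :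
    ∑ x ∈ n.divisorsAntidiagonal, (μ x.1 : K) * (x.2 : K) ^ r
      = (n : K) ^ r * ∏ p ∈ n.primeFactors, (1 - 1 / (p : K) ^ r) := by
  let f : ArithmeticFunction K := ⟨fun d => 1 / (d : K) ^ r, by simp [hr]⟩
  have hf : f.IsMultiplicative := by
    refine IsMultiplicative.iff_ne_zero.mpr ⟨by simp [f], fun _ _ _ => ?_⟩
    simp only [f, ArithmeticFunction.coe_mk, Nat.cast_mul, mul_pow, one_div_mul_one_div]
  calc ∑ x ∈ n.divisorsAntidiagonal, (μ x.1 : K) * (x.2 : K) ^ r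
      = (n : K) ^ r * ∑ d ∈ n.divisors, μ d * f d := by
        rw [mul_sum, Nat.sum_divisorsAntidiagonal (fun a b => (μ a : K) * (b : K) ^ r)]
        refine sum_congr rfl fun d hd => ?_
        have hd0 : (d : K) ≠ 0 := Nat.cast_ne_zero.mpr (Nat.pos_of_mem_divisors hd).ne'
        simp only [f, ArithmeticFunction.coe_mk, Nat.cast_div (Nat.dvd_of_mem_divisors hd) hd0,
          div_pow]
        field_simp
    _ = _ := by rw [sum_divisors_moebius_mul_eq_prod_one_sub hf hn]; rfl

section FiniteAddGroup

open AddSubgroup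

variable {G : Type*}

theorem IsAddCyclic.card_nsmul_eq_zero_of_dvd [AddGroup G] [Fintype G] [DecidableEq G]
    [IsAddCyclic G] {d : ℕ} (hd : d ∣ Fintype.card G) : #{x : G | d • x = 0} = d := by
  have hd0 : d ≠ 0 := by
    rintro rfl
    exact Fintype.card_ne_zero (zero_dvd_iff.mp hd)
  rw [← sum_card_addOrderOf_eq_card_nsmul_eq_zero hd0]
  exact (sum_congr rfl fun m hm => IsAddCyclic.card_addOrderOf_eq_totient
    ((Nat.dvd_of_mem_divisors hm).trans hd)).trans (Nat.sum_totient d)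

theorem card_nsmul_eq_zero_prod {H : Type*} [AddMonoid G] [AddMonoid H] [Fintype G] [Fintype H]
    [DecidableEq G] [DecidableEq H] (n : ℕ) :
    #{v : G × H | n • v = 0} = #{x : G | n • x = 0} * #{y : H | n • y = 0} := by
  rw [← card_product, ← filter_product, univ_product_univ]
  simp only [Prod.ext_iff, Prod.smul_fst, Prod.smul_snd, Prod.fst_zero, Prod.snd_zero]

theorem card_addOrderOf_eq_sum_moebius [AddMonoid G] [Fintype G] [DecidableEq G] {n : ℕ}
    (hn : n ≠ 0) :
    (#{x : G | addOrderOf x = n} : ℤ)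
      = ∑ x ∈ n.divisorsAntidiagonal, μ x.1 * #{v : G | x.2 • v = 0} := by
  refine ((sum_eq_iff_sum_mul_moebius_eq (f := fun i => (#{x : G | addOrderOf x = i} : ℤ))
    (g := fun i => (#{v : G | i • v = 0} : ℤ))).mp (fun m hm => ?_) n hn.bot_lt).symm
  exact_mod_cast sum_card_addOrderOf_eq_card_nsmul_eq_zero (G := G) hm.ne'

theorem zmultiples_eq_zmultiples_iff [AddGroup G] [Finite G] {v w : G} :
    zmultiples v = zmultiples w ↔ v ∈ zmultiples w ∧ addOrderOf v = addOrderOf w := by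
  refine ⟨fun h => ⟨h ▸ mem_zmultiples v, ?_⟩, fun ⟨hv, hvw⟩ => ?_⟩
  · rw [← Nat.card_zmultiples, h, Nat.card_zmultiples]
  · exact eq_of_le_of_card_ge (zmultiples_le.mpr hv)
      (by rw [Nat.card_zmultiples, Nat.card_zmultiples, hvw])

theorem card_zmultiples_eq_zmultiples [AddGroup G] [Finite G] (w : G) :
    Nat.card {v : G // zmultiples v = zmultiples w} = (addOrderOf w).totient := by
  classical
  have : Fintype (zmultiples w) := Fintype.ofFinite _
  rw [Nat.card_congr (Equiv.subtypeEquivRight fun v => zmultiples_eq_zmultiples_iff),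
    ← Nat.card_congr (Equiv.subtypeSubtypeEquivSubtypeInter _ (addOrderOf · = addOrderOf w)),
    Nat.card_eq_fintype_card, Fintype.card_subtype]
  simp_rw [addOrderOf_coe]
  exact IsAddCyclic.card_addOrderOf_eq_totient
    (by rw [← Nat.card_eq_fintype_card, Nat.card_zmultiples])

theorem card_cyclic_addSubgroups_mul_totient [AddGroup G] [Finite G] (n : ℕ) :
    Nat.card {H : AddSubgroup G // (∃ v, H = zmultiples v) ∧ Nat.card H = n} * n.totient
      = Nat.card {v : G // addOrderOf v = n} := by
  classical
  let P (H : AddSubgroup G) : Prop := (∃ w, H = zmultiples w) ∧ Nat.card H = n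
  have horder_iff (v : G) : addOrderOf v = n ↔ P (zmultiples v) := by
    simp [P, Nat.card_zmultiples]
  have := Fintype.ofFinite (Subtype P)
  rw [← Nat.card_congr (Equiv.sigmaSubtypeFiberEquivSubtype _ horder_iff), Nat.card_sigma,
    Nat.card_eq_fintype_card, ← smul_eq_mul, ← card_univ, ← sum_const]
  refine sum_congr rfl fun ⟨H, ⟨w, hw⟩, hcard⟩ _ => ?_
  subst hw
  rw [card_zmultiples_eq_zmultiples, ← Nat.card_zmultiples, hcard]

end FiniteAddGroup

section ZModCube

variable {k : ℕ} [NeZero k]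

theorem card_nsmul_eq_zero_zmod_cube {d : ℕ} (hd : d ∣ k) :
    #{v : ZMod k × ZMod k × ZMod k | d • v = 0} = d ^ 3 := by
  rw [card_nsmul_eq_zero_prod, card_nsmul_eq_zero_prod,
    IsAddCyclic.card_nsmul_eq_zero_of_dvd (by rwa [ZMod.card])]
  ring

theorem card_addOrderOf_eq_zmod_cube :
    (#{v : ZMod k × ZMod k × ZMod k | addOrderOf v = k} : ℚ)
      = (k : ℚ) ^ 3 * ∏ p ∈ k.primeFactors, (1 - 1 / (p : ℚ) ^ 3) := by
  rw [← sum_divisorsAntidiagonal_moebius_mul_pow three_ne_zero (NeZero.ne k),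
    ← Int.cast_natCast, card_addOrderOf_eq_sum_moebius (NeZero.ne k)]
  push_cast
  refine sum_congr rfl fun x hx => ?_
  rw [card_nsmul_eq_zero_zmod_cube
    (Nat.dvd_of_mem_divisors (Nat.snd_mem_divisors_of_mem_antidiagonal hx))]
  norm_cast

end ZModCube

/-- The number of cyclic subgroups of order exactly `k` of `(ℤ/kℤ)³` equals the
generalized Dedekind psi function `Ψ₃(k) = k² ∏_{p ∣ k prime} (1 + 1/p + 1/p²)`. -/
theorem count_cyclic_subgroups_rank_three (k : ℕ) (hk : 0 < k) :
    (Nat.card {H : AddSubgroup (ZMod k × ZMod k × ZMod k) //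
        (∃ v : ZMod k × ZMod k × ZMod k, H = AddSubgroup.zmultiples v) ∧
          Nat.card H = k} : ℚ)
      = (k : ℚ) ^ 2 * ∏ p ∈ k.primeFactors, (1 + 1 / (p : ℚ) + 1 / (p : ℚ) ^ 2) := by
  have : NeZero k := ⟨hk.ne'⟩
  have htotient : (k.totient : ℚ) ≠ 0 := by exact_mod_cast (Nat.totient_pos.mpr hk).ne'
  refine mul_right_cancel₀ htotient ?_
  rw [← Nat.cast_mul, card_cyclic_addSubgroups_mul_totient, Nat.card_eq_fintype_card,
    Fintype.card_subtype, card_addOrderOf_eq_zmod_cube, Nat.totient_eq_mul_prod_factors,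
    mul_mul_mul_comm, ← prod_mul_distrib, ← pow_succ]
  congr 1
  refine prod_congr rfl fun p _ => ?_
  ring
end

section
/- For 0 < μ < 1 let S_μ = {(x, y) ∈ ℝ² : x ≥ 1, y ≥ 1, x² y ≤ μ^{−3}, x y⁵ ≤ μ^{−6}}. Then lim_{μ→0⁺} μ² · area(S_μ) = 9/4, where area denotes two-dimensional Lebesgue measure. -/
/-!
Write `μ = b⁻¹⁰`. The constraints become `x²y ≤ b³⁰` and `xy⁵ ≤ b⁶⁰`, so the vertical slice of
`S_μ` over `x ≥ 1` is `1 ≤ y ≤ min (b³⁰/x²) ((b⁶⁰/x)^(1/5))`. The second bound is the smaller one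
exactly when `x ≤ b¹⁰`, and the slice is empty once `x > b¹⁵`. Integrating over `[1, b¹⁰]` and
`[b¹⁰, b¹⁵]` gives `area S_μ = 9/4 b²⁰ - 2 b¹⁵ - 5/4 b¹² + 1`, that is
`μ² · area S_μ = 9/4 - 2c⁵ - 5/4 c⁸ + c²⁰` with `c = μ^(1/10) → 0`.
-/

open MeasureTheory Filter Real

/-- The region of `(N, k₁)` for type IIB vacua `AdS₅ × S⁵/ℤ_{k₁}` (the `Q = 8` case)
allowed by the cutoff `μ`. -/
def ads5Q8Region (μ : ℝ) : Set (ℝ × ℝ) :=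
  {x | 1 ≤ x.1 ∧ 1 ≤ x.2 ∧
    x.1 ^ 2 * x.2 ≤ μ ^ (-(3 : ℝ)) ∧ x.1 * x.2 ^ 5 ≤ μ ^ (-(6 : ℝ))}

open Set

theorem volume_region_between_cc_eq_integral {α : Type*} [MeasurableSpace α] {μ : Measure α}
    {f g : α → ℝ} {s : Set α} (hf : Measurable f) (hg : Measurable g) (hs : MeasurableSet s)
    (hinteg : IntegrableOn (fun x ↦ g x - f x) s μ) (hfg : ∀ x ∈ s, f x ≤ g x) :
    μ.prod volume {p : α × ℝ | p.1 ∈ s ∧ p.2 ∈ Icc (f p.1) (g p.1)} =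
      ENNReal.ofReal (∫ x in s, g x - f x ∂μ) := by
  have hslice (x : α) :
      volume (Prod.mk x ⁻¹' {p : α × ℝ | p.1 ∈ s ∧ p.2 ∈ Icc (f p.1) (g p.1)}) =
        s.indicator (fun x ↦ ENNReal.ofReal (g x - f x)) x := by
    by_cases hx : x ∈ s
    · rw [indicator_of_mem hx, ← Real.volume_Icc]
      congr 1
      ext y
      simp [hx]
    · simp [hx]
  rw [Measure.prod_apply (measurableSet_region_between_cc hf hg hs), lintegral_congr hslice,
    lintegral_indicator hs, ofReal_integral_eq_lintegral_ofReal hinteg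
      ((ae_restrict_iff' hs).mpr (ae_of_all _ fun x hx ↦ sub_nonneg.2 (hfg x hx)))]

noncomputable def ads5Q8SliceHeight (b x : ℝ) : ℝ :=
  min (b ^ 30 / x ^ 2) ((b ^ 60 / x) ^ (5⁻¹ : ℝ))

section SliceHeight

variable {b x y : ℝ}

theorem le_ads5Q8SliceHeight_iff (hx : 0 < x) (hy : 0 ≤ y) :
    y ≤ ads5Q8SliceHeight b x ↔ x ^ 2 * y ≤ b ^ 30 ∧ x * y ^ 5 ≤ b ^ 60 := by
  have h5 : y ≤ (b ^ 60 / x) ^ (5⁻¹ : ℝ) ↔ x * y ^ 5 ≤ b ^ 60 := by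
    rw [le_rpow_inv_iff_of_pos hy (by positivity) (by norm_num), rpow_ofNat, le_div_iff₀ hx,
      mul_comm]
  rw [ads5Q8SliceHeight, le_min_iff, le_div_iff₀ (by positivity), mul_comm, h5]

theorem ads5Q8SliceHeight_of_le (hx : 0 < x) (hxb : x ≤ b ^ 10) :
    ads5Q8SliceHeight b x = b ^ 12 * x ^ (-5⁻¹ : ℝ) := by
  have hle : (b ^ 60 / x) ^ (5⁻¹ : ℝ) ≤ b ^ 30 / x ^ 2 := by
    rw [rpow_inv_le_iff_of_pos (by positivity) (by positivity) (by norm_num), rpow_ofNat,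
      div_pow, div_le_div_iff₀ hx (by positivity)]
    have : x ^ 9 ≤ (b ^ 10) ^ 9 := pow_le_pow_left₀ hx.le hxb 9
    calc b ^ 60 * (x ^ 2) ^ 5 = b ^ 60 * x * x ^ 9 := by ring
      _ ≤ b ^ 60 * x * (b ^ 10) ^ 9 := by gcongr
      _ = (b ^ 30) ^ 5 * x := by ring
  rw [ads5Q8SliceHeight, min_eq_right hle, div_rpow (by positivity) hx.le, rpow_neg hx.le,
    div_eq_mul_inv, show b ^ 60 = (b ^ 12) ^ 5 by ring, ← rpow_natCast,
    ← rpow_mul (by positivity)]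
  norm_num

theorem ads5Q8SliceHeight_of_ge (hx : 0 < x) (hxb : b ^ 10 ≤ x) :
    ads5Q8SliceHeight b x = b ^ 30 / x ^ 2 := by
  refine min_eq_left ?_
  rw [le_rpow_inv_iff_of_pos (by positivity) (by positivity) (by norm_num), rpow_ofNat,
      div_pow, div_le_div_iff₀ (by positivity) hx]
  have : (b ^ 10) ^ 9 ≤ x ^ 9 := pow_le_pow_left₀ (by positivity) hxb 9
  calc (b ^ 30) ^ 5 * x = b ^ 60 * x * (b ^ 10) ^ 9 := by ring
    _ ≤ b ^ 60 * x * x ^ 9 := by gcongr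
    _ = b ^ 60 * (x ^ 2) ^ 5 := by ring

theorem continuousOn_ads5Q8SliceHeight : ContinuousOn (ads5Q8SliceHeight b) (Ioi 0) := by
  unfold ads5Q8SliceHeight
  fun_prop (disch := intros; simp_all [ne_of_gt])

theorem measurable_ads5Q8SliceHeight : Measurable (ads5Q8SliceHeight b) := by
  unfold ads5Q8SliceHeight
  fun_prop

theorem one_le_ads5Q8SliceHeight (hx : x ∈ Icc 1 (b ^ 15)) : 1 ≤ ads5Q8SliceHeight b x := by
  obtain ⟨h1x, hxb⟩ := hx
  have h1b : 1 ≤ b ^ 15 := h1x.trans hxb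
  rw [le_ads5Q8SliceHeight_iff (by linarith) zero_le_one]
  constructor
  · calc x ^ 2 * 1 ≤ (b ^ 15) ^ 2 := by rw [mul_one]; gcongr
      _ = b ^ 30 := by ring
  · calc x * 1 ^ 5 ≤ b ^ 15 * 1 := by simpa using hxb
      _ ≤ b ^ 15 * (b ^ 15) ^ 3 := by gcongr; exact one_le_pow₀ h1b
      _ = b ^ 60 := by ring

theorem ads5Q8Region_inv_pow_eq (hb : 0 < b) :
    ads5Q8Region (b⁻¹ ^ 10) =
      {p | p.1 ∈ Icc 1 (b ^ 15) ∧ p.2 ∈ Icc 1 (ads5Q8SliceHeight b p.1)} := by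
  have hpow (n : ℕ) : (b⁻¹ ^ 10) ^ (-(n : ℝ)) = b ^ (10 * n) := by
    rw [rpow_neg (by positivity), rpow_natCast, ← pow_mul, inv_pow, inv_inv]
  ext ⟨x, y⟩
  simp only [ads5Q8Region, mem_ofPred_eq, mem_Icc]
  rw [show (-(3 : ℝ)) = -((3 : ℕ) : ℝ) by norm_num, show (-(6 : ℝ)) = -((6 : ℕ) : ℝ) by norm_num,
    hpow, hpow]
  constructor
  · rintro ⟨hx, hy, h1, h2⟩
    refine ⟨⟨hx, ?_⟩, hy, (le_ads5Q8SliceHeight_iff (by linarith) (by linarith)).2 ⟨h1, h2⟩⟩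
    refine le_of_pow_le_pow_left₀ two_ne_zero (by positivity) ?_
    calc x ^ 2 = x ^ 2 * 1 := (mul_one _).symm
      _ ≤ x ^ 2 * y := by gcongr
      _ ≤ (b ^ 15) ^ 2 := by simpa [← pow_mul] using h1
  · rintro ⟨⟨hx, -⟩, hy, h⟩
    exact ⟨hx, hy, (le_ads5Q8SliceHeight_iff (by linarith) (by linarith)).1 h⟩

theorem integral_ads5Q8SliceHeight_sub_one (hb : 1 ≤ b) :
    ∫ x in Icc 1 (b ^ 15), (ads5Q8SliceHeight b x - 1) =
      9 / 4 * b ^ 20 - 2 * b ^ 15 - 5 / 4 * b ^ 12 + 1 := by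
  have h10 : 1 ≤ b ^ 10 := one_le_pow₀ hb
  have h15 : b ^ 10 ≤ b ^ 15 := pow_le_pow_right₀ hb (by norm_num)
  have hinteg {u v : ℝ} (hu : 1 ≤ u) (hv : 1 ≤ v) :
      IntervalIntegrable (fun x ↦ ads5Q8SliceHeight b x - 1) volume u v := by
    refine ((continuousOn_ads5Q8SliceHeight.mono ?_).sub continuousOn_const).intervalIntegrable
    intro x hx
    rw [uIcc, mem_Icc] at hx
    exact lt_of_lt_of_le one_pos (le_min hu hv |>.trans hx.1)
  have left : ∫ x in (1)..b ^ 10, (ads5Q8SliceHeight b x - 1) =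
      5 / 4 * b ^ 20 - 5 / 4 * b ^ 12 - b ^ 10 + 1 := by
    have hEq : EqOn (fun x ↦ ads5Q8SliceHeight b x - 1) (fun x ↦ b ^ 12 * x ^ (-5⁻¹ : ℝ) - 1)
        (uIcc 1 (b ^ 10)) := by
      intro x hx
      rw [uIcc_of_le h10] at hx
      simp only [ads5Q8SliceHeight_of_le (by linarith [hx.1]) hx.2]
    have hpow : (b ^ 10) ^ (-5⁻¹ + 1 : ℝ) = b ^ 8 := by
      rw [← rpow_natCast, ← rpow_mul (by positivity), ← rpow_natCast]
      norm_num
    rw [intervalIntegral.integral_congr hEq, intervalIntegral.integral_sub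
        ((intervalIntegral.intervalIntegrable_rpow' (by norm_num)).const_mul _)
        intervalIntegrable_const, intervalIntegral.integral_const_mul,
      integral_rpow (Or.inl (by norm_num)), intervalIntegral.integral_const, smul_eq_mul,
      hpow, one_rpow]
    ring
  have right : ∫ x in (b ^ 10)..b ^ 15, (ads5Q8SliceHeight b x - 1) =
      b ^ 20 - 2 * b ^ 15 + b ^ 10 := by
    have hEq : EqOn (fun x ↦ ads5Q8SliceHeight b x - 1) (fun x ↦ b ^ 30 * x ^ (-2 : ℤ) - 1)
        (uIcc (b ^ 10) (b ^ 15)) := by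
      intro x hx
      rw [uIcc_of_le h15] at hx
      simp only [ads5Q8SliceHeight_of_ge (by linarith [hx.1]) hx.1, zpow_neg, zpow_ofNat,
        div_eq_mul_inv]
    have hzero : (0 : ℝ) ∉ uIcc (b ^ 10) (b ^ 15) := by
      rw [uIcc_of_le h15]
      exact fun h ↦ by linarith [h.1]
    rw [intervalIntegral.integral_congr hEq, intervalIntegral.integral_sub
        ((intervalIntegral.intervalIntegrable_zpow (Or.inr hzero)).const_mul _)
        intervalIntegrable_const, intervalIntegral.integral_const_mul,
      integral_zpow (Or.inr ⟨by norm_num, hzero⟩), intervalIntegral.integral_const, smul_eq_mul,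
      show (-2 : ℤ) + 1 = -1 by norm_num, zpow_neg_one, zpow_neg_one]
    have : b ≠ 0 := by positivity
    field_simp
    ring
  rw [integral_Icc_eq_integral_Ioc, ← intervalIntegral.integral_of_le (h10.trans h15),
    ← intervalIntegral.integral_add_adjacent_intervals (hinteg le_rfl h10)
      (hinteg h10 (h10.trans h15)),
    left, right]
  ring

theorem volume_ads5Q8Region_inv_pow (hb : 1 ≤ b) :
    (volume (ads5Q8Region (b⁻¹ ^ 10))).toReal =
      9 / 4 * b ^ 20 - 2 * b ^ 15 - 5 / 4 * b ^ 12 + 1 := by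
  have hinteg : IntegrableOn (fun x ↦ ads5Q8SliceHeight b x - 1) (Icc 1 (b ^ 15)) :=
    ((continuousOn_ads5Q8SliceHeight.mono fun x hx ↦ lt_of_lt_of_le one_pos hx.1).sub
      continuousOn_const).integrableOn_Icc
  rw [ads5Q8Region_inv_pow_eq (by positivity), Measure.volume_eq_prod,
    volume_region_between_cc_eq_integral measurable_const measurable_ads5Q8SliceHeight
      measurableSet_Icc hinteg fun x hx ↦ one_le_ads5Q8SliceHeight hx,
    ENNReal.toReal_ofReal (setIntegral_nonneg measurableSet_Icc
      fun x hx ↦ sub_nonneg.2 (one_le_ads5Q8SliceHeight hx)),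
    integral_ads5Q8SliceHeight_sub_one hb]

end SliceHeight

theorem sq_mul_volume_ads5Q8Region {μ : ℝ} (hμ0 : 0 < μ) (hμ1 : μ ≤ 1) :
    μ ^ 2 * (volume (ads5Q8Region μ)).toReal =
      9 / 4 - 2 * (μ ^ (10⁻¹ : ℝ)) ^ 5 - 5 / 4 * (μ ^ (10⁻¹ : ℝ)) ^ 8 + (μ ^ (10⁻¹ : ℝ)) ^ 20 := by
  set c := μ ^ (10⁻¹ : ℝ) with hc
  have hc0 : 0 < c := rpow_pos_of_pos hμ0 _
  have hμc : μ = c⁻¹⁻¹ ^ 10 := by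
    rw [inv_inv, hc, ← rpow_natCast, ← rpow_mul hμ0.le]
    norm_num
  have hb : 1 ≤ c⁻¹ := (one_le_inv₀ hc0).2 (rpow_le_one hμ0.le hμ1 (by norm_num))
  rw [hμc, volume_ads5Q8Region_inv_pow hb]
  field_simp

/-- The continuum count `𝔑^{(Q=8)}_{AdS₅}(μ)` is asymptotic to `(9/4) μ^{−2}`:
`lim_{μ→0⁺} μ² · area(S_μ) = 9/4`. -/
theorem ads5_Q8_count_asymptotics :
    Tendsto (fun μ : ℝ => μ ^ 2 * (volume (ads5Q8Region μ)).toReal)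
      (nhdsWithin 0 (Set.Ioi 0)) (nhds (9 / 4)) := by
  have hroot : Tendsto (fun μ : ℝ ↦ μ ^ (10⁻¹ : ℝ)) (nhdsWithin 0 (Ioi 0)) (nhds 0) := by
    simpa using (continuousAt_rpow_const 0 (10⁻¹ : ℝ) (Or.inr (by norm_num))).tendsto.mono_left
      nhdsWithin_le_nhds
  have hpoly : Tendsto (fun c : ℝ ↦ 9 / 4 - 2 * c ^ 5 - 5 / 4 * c ^ 8 + c ^ 20) (nhds 0)
      (nhds (9 / 4)) := by
    simpa using (by fun_prop : Continuous fun c : ℝ ↦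
      9 / 4 - 2 * c ^ 5 - 5 / 4 * c ^ 8 + c ^ 20).tendsto 0
  refine (hpoly.comp hroot).congr' ?_
  filter_upwards [Ioo_mem_nhdsGT one_pos] with μ hμ
  exact (sq_mul_volume_ads5Q8Region hμ.1 hμ.2.le).symm
end
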